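/- arXiv:1809.01790 — 2 statements merged into one kernel-verified Lean document; each statement's English description precedes it below -/
import Mathlib

section
/- Let $d \ge 2$, $\sigma_s, \varepsilon > 0$, $s > 0$, and $\hat\theta \in (0, \pi/2)$ be the angle with $\frac{\nu_{d-1}}{\nu_d}\int_0^{\hat\theta}\sin^{d-2}\theta\,d\theta = \frac14$. Then for every $\xi$ with $|\xi| \le s$, $\widehat{k}(\xi) \le \frac12 \cdot \frac{1}{1 + \varepsilon^2 \frac{|\xi|^2}{\sigma_s^2}\cos^2\hat\theta} + \frac12$, and consequently there is a constant $C > 0$ independent of $\varepsilon$ with $\widehat{k}(\xi) \le \frac{1}{1 + C\varepsilon^2 |\xi|^2/\sigma_s^2}$ for $\varepsilon$ small enough. -/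
/-!
Both `sin θ ^ (d - 2)` and `cos θ ^ 2` are symmetric about `π / 2`, so the symbol is twice the
integral over `[0, π / 2]`. There the weight `sin θ ^ (d - 2)` puts mass `1 / 4` (after
normalisation) on `[0, θ̂]`, where `cos² θ ≥ cos² θ̂`, and mass `1 / 4` on `[θ̂, π / 2]`, where the
integrand is simply bounded by the weight. The normalisation `ν_{d-1} / ν_d · ∫₀^π sin^{d-2} = 1`
comes from the Gamma-function formula for the volume of the unit ball together with the Wallis
recursion for `∫₀^π sin^n`. The second bound follows from the first since
`(1 / (1 + y) + 1) / 2 ≤ 1 / (1 + y / 4)` for `0 ≤ y ≤ 2`.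
-/

open MeasureTheory Real intervalIntegral Set

noncomputable def unitBallVolume (n : ℕ) : ℝ := √π ^ n / Gamma ((n : ℝ) / 2 + 1)

lemma unitBallVolume_pos (n : ℕ) : 0 < unitBallVolume n :=
  div_pos (pow_pos (sqrt_pos.mpr pi_pos) n) (Gamma_pos_of_pos (by positivity))

lemma unitBallVolume_zero : unitBallVolume 0 = 1 := by
  simp [unitBallVolume]

lemma unitBallVolume_one : unitBallVolume 1 = 2 := by
  have hπ : √π ≠ 0 := (sqrt_pos.mpr pi_pos).ne'
  rw [unitBallVolume, Nat.cast_one, Gamma_add_one (by norm_num), Gamma_one_half_eq]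
  field_simp

lemma unitBallVolume_add_two (n : ℕ) :
    unitBallVolume (n + 2) = 2 * π * unitBallVolume n / ((n : ℝ) + 2) := by
  have hΓ : Gamma (((n + 2 : ℕ) : ℝ) / 2 + 1) = ((n : ℝ) / 2 + 1) * Gamma ((n : ℝ) / 2 + 1) := by
    rw [← Gamma_add_one (by positivity)]
    push_cast
    ring_nf
  have hn : (n : ℝ) / 2 + 1 ≠ 0 := by positivity
  rw [unitBallVolume, unitBallVolume, hΓ, pow_add, sq_sqrt pi_pos.le]
  field_simp

lemma volume_toSphere_univ_toReal (n : ℕ) [NeZero n] :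
    ((volume : Measure (EuclideanSpace ℝ (Fin n))).toSphere univ).toReal =
      n * unitBallVolume n := by
  rw [Measure.toSphere_apply_univ, EuclideanSpace.volume_ball (Fin n) 0 1]
  simp only [ENNReal.ofReal_one, one_pow, one_mul, finrank_euclideanSpace_fin, Fintype.card_fin,
    ENNReal.toReal_mul, ENNReal.toReal_natCast]
  rw [← unitBallVolume, ENNReal.toReal_ofReal (unitBallVolume_pos n).le]

lemma succ_mul_unitBallVolume_succ_mul_integral_sin_pow (n : ℕ) :
    ((n : ℝ) + 1) * unitBallVolume (n + 1) * ∫ x in (0 : ℝ)..π, sin x ^ n =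
      2 * π * unitBallVolume n := by
  induction n using Nat.twoStepInduction with
  | zero => simp [unitBallVolume_zero, unitBallVolume_one]
  | one =>
    rw [unitBallVolume_add_two 0, unitBallVolume_zero, unitBallVolume_one]
    norm_num
  | more n ih _ =>
    have hn : (n : ℝ) + 2 ≠ 0 := by positivity
    have hn' : (n : ℝ) + 3 ≠ 0 := by positivity
    rw [show n + 2 + 1 = n + 1 + 2 by rfl, unitBallVolume_add_two (n + 1),
      unitBallVolume_add_two n, integral_sin_pow]
    simp only [sin_zero, sin_pi, zero_pow (Nat.succ_ne_zero _), zero_mul, sub_zero, zero_div,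
      zero_add]
    push_cast
    field_simp
    linear_combination ((n : ℝ) + 3) * ih

lemma sphere_measure_ratio_mul_integral_sin_pow (d : ℕ) (hd : 2 ≤ d) :
    ((volume : Measure (EuclideanSpace ℝ (Fin (d - 1)))).toSphere univ).toReal /
      ((volume : Measure (EuclideanSpace ℝ (Fin d))).toSphere univ).toReal *
      ∫ θ in (0 : ℝ)..π, sin θ ^ (d - 2) = 1 := by
  obtain ⟨n, rfl⟩ := Nat.exists_eq_add_of_le' hd
  have hB := unitBallVolume_pos (n + 2)
  rw [Nat.add_sub_cancel, show n + 2 - 1 = n + 1 by omega, volume_toSphere_univ_toReal,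
    volume_toSphere_univ_toReal, div_mul_eq_mul_div, div_eq_one_iff_eq (by positivity)]
  push_cast
  rw [succ_mul_unitBallVolume_succ_mul_integral_sin_pow, unitBallVolume_add_two]
  field_simp

lemma integral_zero_pi_eq_two_mul_of_symm {f : ℝ → ℝ} (hf : ∀ x, f (π - x) = f x)
    (hint : IntervalIntegrable f volume 0 π) :
    ∫ x in (0 : ℝ)..π, f x = 2 * ∫ x in (0 : ℝ)..π / 2, f x := by
  have hπ := pi_pos
  have hleft : IntervalIntegrable f volume 0 (π / 2) :=
    hint.mono_set (by rw [uIcc_of_le (by linarith), uIcc_of_le hπ.le]; gcongr; linarith)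
  have hright : IntervalIntegrable f volume (π / 2) π :=
    hint.mono_set (by rw [uIcc_of_le (by linarith), uIcc_of_le hπ.le]; gcongr; linarith)
  have hreflect : ∫ x in π / 2..π, f x = ∫ x in (0 : ℝ)..π / 2, f x := by
    simpa [hf, sub_self, sub_half] using integral_comp_sub_left (a := π / 2) (b := π) f π
  rw [← integral_add_adjacent_intervals hleft hright, hreflect, two_mul]

lemma integral_div_one_add_mul_cos_sq_le {w : ℝ → ℝ} (hw : Continuous w)
    (hw0 : ∀ θ ∈ Icc 0 (π / 2), 0 ≤ w θ) {a θ₀ : ℝ} (ha : 0 ≤ a) (h0 : 0 ≤ θ₀)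
    (h1 : θ₀ ≤ π / 2) :
    ∫ θ in (0 : ℝ)..π / 2, w θ / (1 + a * cos θ ^ 2) ≤
      (∫ θ in (0 : ℝ)..θ₀, w θ) / (1 + a * cos θ₀ ^ 2) + ∫ θ in θ₀..π / 2, w θ := by
  have hpos : ∀ θ, 0 < 1 + a * cos θ ^ 2 := fun θ => by positivity
  have hg : Continuous fun θ => w θ / (1 + a * cos θ ^ 2) :=
    hw.div (by fun_prop) fun θ => (hpos θ).ne'
  have hnear : ∫ θ in (0 : ℝ)..θ₀, w θ / (1 + a * cos θ ^ 2) ≤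
      (∫ θ in (0 : ℝ)..θ₀, w θ) / (1 + a * cos θ₀ ^ 2) := by
    rw [← intervalIntegral.integral_div]
    refine integral_mono_on h0 (hg.intervalIntegrable _ _)
      ((hw.intervalIntegrable _ _).div_const _) fun θ hθ => ?_
    have hcos : cos θ₀ ≤ cos θ := cos_le_cos_of_nonneg_of_le_pi hθ.1 (by linarith [pi_pos]) hθ.2
    have hcos₀ : 0 ≤ cos θ₀ := cos_nonneg_of_mem_Icc ⟨by linarith [pi_pos], h1⟩
    have hsq : cos θ₀ ^ 2 ≤ cos θ ^ 2 := pow_le_pow_left₀ hcos₀ hcos 2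
    exact div_le_div_of_nonneg_left (hw0 θ ⟨hθ.1, hθ.2.trans h1⟩) (hpos θ₀) (by gcongr)
  have hfar : ∫ θ in θ₀..π / 2, w θ / (1 + a * cos θ ^ 2) ≤ ∫ θ in θ₀..π / 2, w θ :=
    integral_mono_on h1 (hg.intervalIntegrable _ _) (hw.intervalIntegrable _ _) fun θ hθ =>
      div_le_self (hw0 θ ⟨h0.trans hθ.1, hθ.2⟩) (le_add_of_nonneg_right (by positivity))
  rw [← integral_add_adjacent_intervals (hg.intervalIntegrable 0 θ₀)
    (hg.intervalIntegrable θ₀ (π / 2))]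
  exact add_le_add hnear hfar

lemma mul_integral_sin_pow_div_one_add_mul_cos_sq_le (m : ℕ) {c a θ₀ : ℝ} (hc : 0 ≤ c)
    (ha : 0 ≤ a) (h0 : 0 ≤ θ₀) (h1 : θ₀ ≤ π / 2)
    (hquarter : c * ∫ θ in (0 : ℝ)..θ₀, sin θ ^ m = 1 / 4)
    (hone : c * ∫ θ in (0 : ℝ)..π, sin θ ^ m = 1) :
    c * ∫ θ in (0 : ℝ)..π, sin θ ^ m / (1 + a * cos θ ^ 2) ≤
      1 / 2 * (1 / (1 + a * cos θ₀ ^ 2)) + 1 / 2 := by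
  have hsin : Continuous fun θ => sin θ ^ m := by fun_prop
  have hg : Continuous fun θ => sin θ ^ m / (1 + a * cos θ ^ 2) :=
    hsin.div (by fun_prop) fun θ => by positivity
  have hfold := integral_zero_pi_eq_two_mul_of_symm (fun x => by simp [sin_pi_sub])
    (hsin.intervalIntegrable 0 π)
  have hfar : c * ∫ θ in θ₀..π / 2, sin θ ^ m = 1 / 4 := by
    rw [hfold, ← integral_add_adjacent_intervals (hsin.intervalIntegrable 0 θ₀)
      (hsin.intervalIntegrable θ₀ (π / 2))] at hone
    linarith
  have hbound := integral_div_one_add_mul_cos_sq_le hsin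
    (fun θ hθ => pow_nonneg (sin_nonneg_of_nonneg_of_le_pi hθ.1 (by linarith [hθ.2, pi_pos])) m)
    ha h0 h1
  rw [integral_zero_pi_eq_two_mul_of_symm (fun x => by simp [sin_pi_sub, cos_pi_sub])
    (hg.intervalIntegrable 0 π)]
  calc c * (2 * ∫ θ in (0 : ℝ)..π / 2, sin θ ^ m / (1 + a * cos θ ^ 2))
      ≤ 2 * (c * (∫ θ in (0 : ℝ)..θ₀, sin θ ^ m) / (1 + a * cos θ₀ ^ 2) +
          c * ∫ θ in θ₀..π / 2, sin θ ^ m) := by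
        rw [mul_div_assoc, ← mul_add, mul_left_comm]
        gcongr
    _ = 1 / 2 * (1 / (1 + a * cos θ₀ ^ 2)) + 1 / 2 := by
        rw [hquarter, hfar]
        ring

lemma half_mul_one_div_one_add_add_half_le {y : ℝ} (h0 : 0 ≤ y) (h2 : y ≤ 2) :
    1 / 2 * (1 / (1 + y)) + 1 / 2 ≤ 1 / (1 + y / 4) := by
  rw [← sub_nonneg]
  have key : 1 / (1 + y / 4) - (1 / 2 * (1 / (1 + y)) + 1 / 2) =
      y * (2 - y) / (2 * (4 + y) * (1 + y)) := by
    field_simp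
    ring
  rw [key]
  have : 0 ≤ 2 - y := by linarith
  positivity

/-- Bound on the Fourier symbol of the scattering kernel for low frequencies `|ξ| ≤ s`,
and the resulting bound `k̂(ξ) ≤ 1/(1 + C ε² |ξ|²/σ_s²)` for small `ε`, with `C`
independent of `ε`. -/
theorem scattering_symbol_low_freq_bound (d : ℕ) (hd : 2 ≤ d) (σs s θhat : ℝ)
    (hσ : 0 < σs) (hs : 0 < s) (hθ1 : 0 < θhat) (hθ2 : θhat < Real.pi / 2) :
    let νd := ((volume : Measure (EuclideanSpace ℝ (Fin d))).toSphere Set.univ).toReal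
    let νd1 := ((volume : Measure (EuclideanSpace ℝ (Fin (d - 1)))).toSphere Set.univ).toReal
    let F : ℝ → ℝ → ℝ := fun ε r => νd1 / νd *
      ∫ θ in (0 : ℝ)..Real.pi,
        (Real.sin θ) ^ (d - 2) / (1 + ε ^ 2 * r ^ 2 / σs ^ 2 * (Real.cos θ) ^ 2)
    νd1 / νd * ∫ θ in (0 : ℝ)..θhat, (Real.sin θ) ^ (d - 2) = 1 / 4 →
    ((∀ ε : ℝ, 0 < ε → ∀ r : ℝ, 0 ≤ r → r ≤ s →
        F ε r ≤ 1 / 2 * (1 / (1 + ε ^ 2 * r ^ 2 / σs ^ 2 * (Real.cos θhat) ^ 2)) + 1 / 2) ∧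
      ∃ C > 0, ∃ ε₀ > 0, ∀ ε : ℝ, 0 < ε → ε ≤ ε₀ → ∀ r : ℝ, 0 ≤ r → r ≤ s →
        F ε r ≤ 1 / (1 + C * ε ^ 2 * r ^ 2 / σs ^ 2)) := by
  intro νd νd1 F hquarter
  have bound (ε r : ℝ) : F ε r ≤
      1 / 2 * (1 / (1 + ε ^ 2 * r ^ 2 / σs ^ 2 * cos θhat ^ 2)) + 1 / 2 :=
    mul_integral_sin_pow_div_one_add_mul_cos_sq_le (d - 2) (by positivity) (by positivity)
      hθ1.le hθ2.le hquarter (sphere_measure_ratio_mul_integral_sin_pow d hd)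
  have hcos : 0 < cos θhat := cos_pos_of_mem_Ioo ⟨by linarith [pi_pos], hθ2⟩
  refine ⟨fun ε _ r _ _ => bound ε r, cos θhat ^ 2 / 4, by positivity, σs / s, by positivity, ?_⟩
  intro ε hε hεε r hr hrs
  have hεr : ε * r ≤ σs := by
    calc ε * r ≤ σs / s * s := by gcongr
      _ = σs := div_mul_cancel₀ σs hs.ne'
  have hy : ε ^ 2 * r ^ 2 / σs ^ 2 * cos θhat ^ 2 ≤ 2 := by
    have h1 : ε ^ 2 * r ^ 2 / σs ^ 2 ≤ 1 := by
      rw [div_le_one (by positivity), ← mul_pow]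
      exact pow_le_pow_left₀ (by positivity) hεr 2
    have h2 : cos θhat ^ 2 ≤ 1 := by nlinarith [cos_le_one θhat]
    nlinarith [sq_nonneg (cos θhat)]
  calc F ε r ≤ _ := bound ε r
    _ ≤ 1 / (1 + ε ^ 2 * r ^ 2 / σs ^ 2 * cos θhat ^ 2 / 4) :=
        half_mul_one_div_one_add_add_half_le (by positivity) hy
    _ = 1 / (1 + cos θhat ^ 2 / 4 * ε ^ 2 * r ^ 2 / σs ^ 2) := by ring
end

section
/- Let $q > 0$, $d \ge 2$, and let $X_{q\theta\beta} = \{f \in C_0^q(K) : \|f\|_\infty \le \theta, \|f\|_{C^q} \le \beta, f \ge 0\}$ with metric induced by the $L^\infty$ norm, where $K$ is a closed ball in $\mathbb{R}^d$. Then there is a constant $\mu > 0$ such that for any $\beta > 0$ and $\theta \in (0, \mu\beta)$, there exists a $\theta$-distinguishable subset $Z \subset X_{q\theta\beta}$ (i.e., $\|z_1 - z_2\|_\infty \ge \theta$ for all distinct $z_1, z_2 \in Z$) with $|Z| \ge \exp\big(2^{-d-1}(\mu\beta/\theta)^{d/q}\big)$. -/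
/-!
Put a bump of height `θ` and width `h` at each point of a grid of spacing `3h` in `K`; there are
`m^d` grid points with `m ≍ 1/h`. Near every point a sum of such bumps over a subset of the grid
coincides with a single bump (or with `0`), so its `i`-th derivative is at most `θ B h^{-i}`, and
interpolating between the orders `⌊q⌋` and `⌊q⌋ + 1` bounds its `C^q` norm by `3 B θ h^{-q}`.
The `2^{m^d}` subset sums are pairwise `θ` apart in sup norm, as one sees at a grid point where
the subsets differ. Choosing `h^q = 3 B θ / β` gives `m ≍ (μβ/θ)^{1/q}`.
-/

open scoped NNReal

open Classical in

/-- The Hölder/`C^q` norm of a function `f : ℝ^d → ℝ` for real `q > 0`: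
the sup norms of the iterated derivatives up to order `⌊q⌋`, plus the Hölder
seminorm of exponent `q - ⌊q⌋` of the top-order derivative. -/
noncomputable def cqNorm (d : ℕ) (q : ℝ) (f : EuclideanSpace ℝ (Fin d) → ℝ) : ℝ :=
  (⨆ i : Fin (⌊q⌋₊ + 1), ⨆ x : EuclideanSpace ℝ (Fin d), ‖iteratedFDeriv ℝ i f x‖) +
    ⨆ p : EuclideanSpace ℝ (Fin d) × EuclideanSpace ℝ (Fin d),
      if p.1 = p.2 then 0 else
        ‖iteratedFDeriv ℝ ⌊q⌋₊ f p.1 - iteratedFDeriv ℝ ⌊q⌋₊ f p.2‖ /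
          ‖p.1 - p.2‖ ^ (q - (⌊q⌋₊ : ℝ))

open Metric Filter Topology
open scoped ContDiff

section SeparatedSum

variable {X M : Type*} [PseudoMetricSpace X] [AddCommMonoid M]
  {V : Type*} {c : V → X} {g : V → X → M} {h : ℝ}

theorem eventuallyEq_sum_of_separated (hh : 0 < h)
    (hsep : Pairwise fun v w => 3 * h ≤ dist (c v) (c w))
    (hg : ∀ v, tsupport (g v) ⊆ closedBall (c v) h) (S : Finset V) (x : X) :
    (fun y => ∑ v ∈ S, g v y) =ᶠ[𝓝 x] 0 ∨ ∃ a, (fun y => ∑ v ∈ S, g v y) =ᶠ[𝓝 x] g a := by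
  by_cases hx : ∃ a ∈ S, dist x (c a) ≤ h
  · obtain ⟨a, haS, hxa⟩ := hx
    refine Or.inr ⟨a, ?_⟩
    filter_upwards [ball_mem_nhds x hh] with y hy
    refine Finset.sum_eq_single_of_mem a haS fun v _ hva =>
      image_eq_zero_of_notMem_tsupport fun hyv => ?_
    have hfar : 3 * h ≤ dist (c a) (c v) := hsep hva.symm
    have := dist_triangle4 (c a) x y (c v)
    rw [dist_comm (c a) x, dist_comm x y] at this
    linarith [mem_closedBall.mp (hg v hyv), mem_ball.mp hy]
  · push Not at hx
    refine Or.inl ?_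
    have hvanish : ∀ v ∈ S, ∀ᶠ y in 𝓝 x, g v y = 0 := fun v hv =>
      eventually_of_mem (isClosed_closedBall.isOpen_compl.mem_nhds (not_le.mpr (hx v hv)))
        fun y hy => image_eq_zero_of_notMem_tsupport fun hyv => hy (hg v hyv)
    filter_upwards [(eventually_all_finset S).mpr hvanish] with y hy
    exact Finset.sum_eq_zero hy

end SeparatedSum

section Derivatives

variable {E F : Type*} [NormedAddCommGroup E] [NormedSpace ℝ E]
  [NormedAddCommGroup F] [NormedSpace ℝ F]

theorem norm_iteratedFDeriv_sum_le_of_separated {V : Type*} {c : V → E} {g : V → E → F} {h : ℝ}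
    (hh : 0 < h) (hsep : Pairwise fun v w => 3 * h ≤ dist (c v) (c w))
    (hg : ∀ v, tsupport (g v) ⊆ closedBall (c v) h) {n : ℕ} {C : ℝ} (hC0 : 0 ≤ C)
    (hC : ∀ v y, ‖iteratedFDeriv ℝ n (g v) y‖ ≤ C) (S : Finset V) (x : E) :
    ‖iteratedFDeriv ℝ n (fun y => ∑ v ∈ S, g v y) x‖ ≤ C := by
  rcases eventuallyEq_sum_of_separated hh hsep hg S x with hzero | ⟨a, ha⟩
  · rw [(hzero.iteratedFDeriv ℝ n).eq_of_nhds]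
    simpa using hC0
  · rw [(ha.iteratedFDeriv ℝ n).eq_of_nhds]
    exact hC a x

theorem norm_iteratedFDeriv_sub_le_of_norm_le {f : E → F} {k : ℕ} (hf : ContDiff ℝ (k + 1) f)
    {a h α : ℝ} (hh : 0 < h) (hα0 : 0 ≤ α) (hα1 : α ≤ 1)
    (hk : ∀ z, ‖iteratedFDeriv ℝ k f z‖ ≤ a) (hk1 : ∀ z, ‖iteratedFDeriv ℝ (k + 1) f z‖ ≤ a / h)
    (x y : E) :
    ‖iteratedFDeriv ℝ k f x - iteratedFDeriv ℝ k f y‖ ≤ 2 * a * h ^ (-α) * ‖x - y‖ ^ α := by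
  have ha : 0 ≤ a := (norm_nonneg _).trans (hk x)
  have hscale : 2 * a * h ^ (-α) * ‖x - y‖ ^ α = 2 * a * (‖x - y‖ / h) ^ α := by
    rw [Real.div_rpow (norm_nonneg _) hh.le, Real.rpow_neg hh.le]
    ring
  rw [hscale]
  rcases le_or_gt ‖x - y‖ h with hnear | hfar
  · have hlip : ‖iteratedFDeriv ℝ k f x - iteratedFDeriv ℝ k f y‖ ≤ a / h * ‖x - y‖ :=
      convex_univ.norm_image_sub_le_of_norm_fderiv_le
        (fun z _ => hf.differentiable_iteratedFDeriv (by norm_cast; omega) z)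
        (fun z _ => (norm_fderiv_iteratedFDeriv).trans_le (hk1 z))
        (Set.mem_univ y) (Set.mem_univ x)
    have hratio : ‖x - y‖ / h ≤ (‖x - y‖ / h) ^ α :=
      Real.self_le_rpow_of_le_one (by positivity) ((div_le_one hh).mpr hnear) hα1
    calc _ ≤ a / h * ‖x - y‖ := hlip
      _ = a * (‖x - y‖ / h) := by ring
      _ ≤ a * (‖x - y‖ / h) ^ α := mul_le_mul_of_nonneg_left hratio ha
      _ ≤ 2 * a * (‖x - y‖ / h) ^ α := by
        linarith [mul_nonneg ha (Real.rpow_nonneg (by positivity : 0 ≤ ‖x - y‖ / h) α)]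
  · calc _ ≤ a + a := (norm_sub_le _ _).trans (add_le_add (hk x) (hk y))
      _ = 2 * a * 1 := by ring
      _ ≤ 2 * a * (‖x - y‖ / h) ^ α :=
        mul_le_mul_of_nonneg_left (Real.one_le_rpow ((one_le_div hh).mpr hfar.le) hα0)
          (by positivity)

theorem ContDiff.exists_pos_bound_iteratedFDeriv {f : E → F} (hf : ContDiff ℝ ∞ f)
    (hsupp : HasCompactSupport f) (N : ℕ) :
    ∃ B, 0 < B ∧ ∀ i ≤ N, ∀ x, ‖iteratedFDeriv ℝ i f x‖ ≤ B := by
  choose C hC using fun i : Fin (N + 1) => (hsupp.iteratedFDeriv i).exists_bound_of_continuous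
    (hf.continuous_iteratedFDeriv (by exact_mod_cast le_top))
  exact ⟨max 1 (⨆ i, C i), by positivity, fun i hi x => (hC ⟨i, by omega⟩ x).trans
    ((le_ciSup (Finite.bddAbove_range C) _).trans (le_max_right _ _))⟩

end Derivatives

theorem cqNorm_le {d : ℕ} {q A H : ℝ} {f : EuclideanSpace ℝ (Fin d) → ℝ}
    (hA : ∀ i ≤ ⌊q⌋₊, ∀ x, ‖iteratedFDeriv ℝ i f x‖ ≤ A) (hH0 : 0 ≤ H)
    (hH : ∀ x y, ‖iteratedFDeriv ℝ ⌊q⌋₊ f x - iteratedFDeriv ℝ ⌊q⌋₊ f y‖ ≤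
      H * ‖x - y‖ ^ (q - ⌊q⌋₊)) :
    cqNorm d q f ≤ A + H := by
  refine add_le_add (ciSup_le fun i => ciSup_le fun x => hA i (Nat.lt_succ_iff.mp i.isLt) x)
    (ciSup_le fun p => ?_)
  split_ifs with hp
  · exact hH0
  · rw [div_le_iff₀ (Real.rpow_pos_of_pos (norm_pos_iff.mpr (sub_ne_zero.mpr hp)) _)]
    exact hH p.1 p.2

section Bump

variable {E : Type*} [NormedAddCommGroup E] [NormedSpace ℝ E] [HasContDiffBump E]

variable (E) in
noncomputable def unitBump : ContDiffBump (0 : E) := ⟨1 / 2, 1, by norm_num, by norm_num⟩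

noncomputable def scaledBump (θ h : ℝ) (c x : E) : ℝ := θ * unitBump E (h⁻¹ • (x - c))

variable {θ h : ℝ} {c : E}

theorem contDiff_scaledBump {n : ℕ∞} : ContDiff ℝ n (scaledBump θ h c) :=
  contDiff_const.mul ((unitBump E).contDiff.comp ((contDiff_id.sub contDiff_const).const_smul _))

theorem scaledBump_self : scaledBump θ h c c = θ := by
  rw [scaledBump, sub_self, smul_zero,
    (unitBump E).one_of_mem_closedBall (mem_closedBall_self (unitBump E).rIn_pos.le), mul_one]

theorem scaledBump_nonneg (hθ : 0 ≤ θ) (x : E) : 0 ≤ scaledBump θ h c x :=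
  mul_nonneg hθ (unitBump E).nonneg

theorem abs_scaledBump_le (hθ : 0 ≤ θ) (x : E) : |scaledBump θ h c x| ≤ θ := by
  rw [abs_of_nonneg (scaledBump_nonneg hθ x)]
  exact mul_le_of_le_one_right hθ (unitBump E).le_one

theorem tsupport_scaledBump_subset (hh : 0 < h) : tsupport (scaledBump θ h c) ⊆ closedBall c h := by
  refine closure_minimal (fun x hx => ?_) isClosed_closedBall
  have hx' : h⁻¹ • (x - c) ∈ Function.support (unitBump E) := right_ne_zero_of_mul hx
  rw [(unitBump E).support_eq, mem_ball_zero_iff, norm_smul, norm_inv, Real.norm_of_nonneg hh.le,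
    inv_mul_lt_iff₀ hh] at hx'
  rw [mem_closedBall, dist_eq_norm]
  exact le_of_lt (by simpa [unitBump] using hx')

theorem norm_iteratedFDeriv_scaledBump_le (hθ : 0 ≤ θ) (hh : 0 < h) {i : ℕ} {B : ℝ}
    (hB : ∀ x, ‖iteratedFDeriv ℝ i (unitBump E) x‖ ≤ B) (x : E) :
    ‖iteratedFDeriv ℝ i (scaledBump θ h c) x‖ ≤ θ * B * h⁻¹ ^ i := by
  have hshifted : ContDiff ℝ i fun x : E => unitBump E (h⁻¹ • (x - c)) :=
    (unitBump E).contDiff.comp ((contDiff_id.sub contDiff_const).const_smul _)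
  change ‖iteratedFDeriv ℝ i (fun x => θ • (fun z => unitBump E (h⁻¹ • z)) (x - c)) x‖ ≤ _
  rw [iteratedFDeriv_const_smul_apply' hshifted.contDiffAt,
    iteratedFDeriv_comp_sub (f := fun z => unitBump E (h⁻¹ • z)),
    iteratedFDeriv_comp_const_smul h⁻¹ (unitBump E).contDiff, norm_smul, norm_smul, norm_pow,
    norm_inv, Real.norm_of_nonneg hθ, Real.norm_of_nonneg hh.le]
  calc θ * (h⁻¹ ^ i * _) ≤ θ * (h⁻¹ ^ i * B) := by gcongr; exact hB _
    _ = θ * B * h⁻¹ ^ i := by ring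

end Bump

section BumpSum

variable {E V : Type*} [NormedAddCommGroup E] [NormedSpace ℝ E] [HasContDiffBump E]
  {θ h : ℝ} {c : V → E}

noncomputable def bumpSum (θ h : ℝ) (c : V → E) (S : Finset V) (x : E) : ℝ :=
  ∑ v ∈ S, scaledBump θ h (c v) x

theorem contDiff_bumpSum {n : ℕ∞} (S : Finset V) : ContDiff ℝ n (bumpSum θ h c S) :=
  ContDiff.sum fun _ _ => contDiff_scaledBump

theorem bumpSum_nonneg (hθ : 0 ≤ θ) (S : Finset V) (x : E) : 0 ≤ bumpSum θ h c S x :=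
  Finset.sum_nonneg fun _ _ => scaledBump_nonneg hθ x

theorem tsupport_bumpSum_subset (hh : 0 < h) {K : Set E} (hK : IsClosed K)
    (hball : ∀ v, closedBall (c v) h ⊆ K) (S : Finset V) : tsupport (bumpSum θ h c S) ⊆ K := by
  refine closure_minimal (fun x hx => ?_) hK
  obtain ⟨v, -, hv⟩ := Finset.exists_ne_zero_of_sum_ne_zero hx
  exact hball v (tsupport_scaledBump_subset hh (subset_closure hv))

theorem bumpSum_apply_center [DecidableEq V] (hh : 0 < h)
    (hsep : Pairwise fun v w => 3 * h ≤ dist (c v) (c w)) (S : Finset V) (v : V) :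
    bumpSum θ h c S (c v) = if v ∈ S then θ else 0 := by
  have hcenter : ∀ w, scaledBump θ h (c w) (c v) = if w = v then θ else 0 := by
    intro w
    split_ifs with hwv
    · rw [hwv, scaledBump_self]
    · refine image_eq_zero_of_notMem_tsupport fun hmem => ?_
      have hfar : 3 * h ≤ dist (c v) (c w) := hsep (Ne.symm hwv)
      linarith [mem_closedBall.mp (tsupport_scaledBump_subset hh hmem)]
  simp only [bumpSum, hcenter, Finset.sum_ite_eq']

theorem abs_bumpSum_le (hθ : 0 ≤ θ) (hh : 0 < h)
    (hsep : Pairwise fun v w => 3 * h ≤ dist (c v) (c w)) (S : Finset V) (x : E) :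
    |bumpSum θ h c S x| ≤ θ := by
  have := norm_iteratedFDeriv_sum_le_of_separated (n := 0) hh hsep
    (fun _ => tsupport_scaledBump_subset hh) hθ
    (fun _ y => by rw [norm_iteratedFDeriv_zero]; exact abs_scaledBump_le hθ y) S x
  rwa [norm_iteratedFDeriv_zero] at this

theorem norm_iteratedFDeriv_bumpSum_le (hθ : 0 ≤ θ) (hh : 0 < h)
    (hsep : Pairwise fun v w => 3 * h ≤ dist (c v) (c w)) {i : ℕ} {B : ℝ}
    (hB : ∀ x, ‖iteratedFDeriv ℝ i (unitBump E) x‖ ≤ B) (S : Finset V) (x : E) :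
    ‖iteratedFDeriv ℝ i (bumpSum θ h c S) x‖ ≤ θ * B * h⁻¹ ^ i :=
  norm_iteratedFDeriv_sum_le_of_separated hh hsep (fun _ => tsupport_scaledBump_subset hh)
    (by have := (norm_nonneg _).trans (hB 0); positivity)
    (fun _ y => norm_iteratedFDeriv_scaledBump_le hθ hh hB y) S x

theorem le_iSup_abs_bumpSum_sub (hθ : 0 ≤ θ) (hh : 0 < h)
    (hsep : Pairwise fun v w => 3 * h ≤ dist (c v) (c w)) {S T : Finset V} (hST : S ≠ T) :
    θ ≤ ⨆ x, |bumpSum θ h c S x - bumpSum θ h c T x| := by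
  classical
  obtain ⟨v, hv⟩ : ∃ v, ¬(v ∈ S ↔ v ∈ T) := by simpa [Finset.ext_iff] using hST
  have hbdd : BddAbove (Set.range fun x => |bumpSum θ h c S x - bumpSum θ h c T x|) := by
    refine ⟨θ + θ, ?_⟩
    rintro _ ⟨x, rfl⟩
    exact (abs_sub _ _).trans (add_le_add (abs_bumpSum_le hθ hh hsep S x)
      (abs_bumpSum_le hθ hh hsep T x))
  refine le_ciSup_of_le hbdd (c v) ?_
  rw [bumpSum_apply_center hh hsep, bumpSum_apply_center hh hsep]
  by_cases hS : v ∈ S <;> by_cases hT : v ∈ T <;> simp_all [abs_of_nonneg hθ]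

theorem bumpSum_injective (hθ : 0 < θ) (hh : 0 < h)
    (hsep : Pairwise fun v w => 3 * h ≤ dist (c v) (c w)) :
    Function.Injective (bumpSum θ h c) := by
  intro S T hST
  by_contra hne
  have := le_iSup_abs_bumpSum_sub hθ.le hh hsep hne
  simp only [hST, sub_self, abs_zero, ciSup_const] at this
  exact this.not_gt hθ

end BumpSum

theorem cqNorm_bumpSum_le {d : ℕ} {V : Type*} {c : V → EuclideanSpace ℝ (Fin d)} {q B θ h : ℝ}
    (hq : 0 ≤ q) (hθ : 0 ≤ θ) (hh0 : 0 < h) (hh1 : h ≤ 1)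
    (hsep : Pairwise fun v w => 3 * h ≤ dist (c v) (c w))
    (hB : ∀ i ≤ ⌊q⌋₊ + 1, ∀ x, ‖iteratedFDeriv ℝ i (unitBump (EuclideanSpace ℝ (Fin d))) x‖ ≤ B)
    (S : Finset V) :
    cqNorm d q (bumpSum θ h c S) ≤ 3 * B * θ * h ^ (-q) := by
  set k := ⌊q⌋₊
  have hkq : (k : ℝ) ≤ q := Nat.floor_le hq
  have hqk : q - k ≤ 1 := by linarith [Nat.lt_floor_add_one q]
  have hB0 : 0 ≤ B := (norm_nonneg _).trans (hB 0 (Nat.zero_le _) 0)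
  have hD i (hi : i ≤ k + 1) := norm_iteratedFDeriv_bumpSum_le hθ hh0 hsep (hB i hi) S
  have hpow (i : ℕ) : h⁻¹ ^ i = h ^ (-(i : ℝ)) := by
    rw [Real.rpow_neg hh0.le, Real.rpow_natCast, inv_pow]
  have hlow (i) (hi : i ≤ k) (x) :
      ‖iteratedFDeriv ℝ i (bumpSum θ h c S) x‖ ≤ θ * B * h ^ (-q) := by
    refine (hD i (hi.trans k.le_succ) x).trans ?_
    rw [hpow]
    have hiq : -q ≤ -(i : ℝ) := neg_le_neg (hkq.trans' (by exact_mod_cast hi))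
    exact mul_le_mul_of_nonneg_left (Real.rpow_le_rpow_of_exponent_ge hh0 hh1 hiq) (by positivity)
  have htop (x) : ‖iteratedFDeriv ℝ (k + 1) (bumpSum θ h c S) x‖ ≤ θ * B * h⁻¹ ^ k / h :=
    (hD (k + 1) le_rfl x).trans_eq (by rw [pow_succ]; field_simp)
  calc cqNorm d q (bumpSum θ h c S)
      ≤ θ * B * h ^ (-q) + 2 * (θ * B * h⁻¹ ^ k) * h ^ (-(q - k)) :=
        cqNorm_le hlow (by positivity) (norm_iteratedFDeriv_sub_le_of_norm_le
          (contDiff_bumpSum S) hh0 (sub_nonneg.mpr hkq) hqk (hD k k.le_succ) htop)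
    _ = 3 * B * θ * h ^ (-q) := by
        have hexp : h⁻¹ ^ k * h ^ (-(q - k)) = h ^ (-q) := by
          rw [hpow, ← Real.rpow_add hh0]
          ring_nf
        linear_combination (2 * θ * B) * hexp

section Grid

variable {d m : ℕ}

noncomputable def gridPoint (x₀ : EuclideanSpace ℝ (Fin d)) (s : ℝ) (v : Fin d → Fin m) :
    EuclideanSpace ℝ (Fin d) :=
  x₀ + s • WithLp.toLp 2 fun i => (v i : ℝ)

theorem le_dist_gridPoint (x₀ : EuclideanSpace ℝ (Fin d)) {s : ℝ} (hs : 0 ≤ s)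
    {v w : Fin d → Fin m} (hvw : v ≠ w) : s ≤ dist (gridPoint x₀ s v) (gridPoint x₀ s w) := by
  obtain ⟨i, hi⟩ := Function.ne_iff.mp hvw
  have hcoord : (1 : ℝ) ≤ |(v i : ℝ) - w i| := by
    have : ((v i : ℤ) : ℝ) - (w i : ℤ) ≠ 0 := by
      exact_mod_cast sub_ne_zero.mpr (Int.ofNat_inj.not.mpr (Fin.val_ne_of_ne hi))
    exact_mod_cast Int.one_le_abs (by exact_mod_cast this)
  rw [dist_eq_norm, gridPoint, gridPoint, add_sub_add_left_eq_sub, ← smul_sub, norm_smul,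
    Real.norm_of_nonneg hs]
  refine le_mul_of_one_le_right hs (hcoord.trans ?_)
  simpa using PiLp.norm_apply_le (WithLp.toLp 2 (fun i => (v i : ℝ)) -
    WithLp.toLp 2 (fun i => (w i : ℝ))) i

theorem dist_gridPoint_le (x₀ : EuclideanSpace ℝ (Fin d)) {s : ℝ} (hs : 0 ≤ s)
    (v : Fin d → Fin m) : dist (gridPoint x₀ s v) x₀ ≤ s * (√d * m) := by
  rw [dist_eq_norm, gridPoint, add_sub_cancel_left, norm_smul, Real.norm_of_nonneg hs,
    EuclideanSpace.norm_eq]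
  gcongr
  calc √(∑ i, ‖(v i : ℝ)‖ ^ 2) ≤ √(∑ _i : Fin d, (m : ℝ) ^ 2) := by
        gcongr with i
        simp [(v i).isLt.le]
    _ = √d * m := by simp [Real.sqrt_mul (Nat.cast_nonneg d)]

end Grid

theorem exists_bumpSum_packing {d : ℕ} {q B : ℝ} (hq : 0 ≤ q)
    (hB : ∀ i ≤ ⌊q⌋₊ + 1, ∀ x, ‖iteratedFDeriv ℝ i (unitBump (EuclideanSpace ℝ (Fin d))) x‖ ≤ B)
    (x₀ : EuclideanSpace ℝ (Fin d)) {r h θ : ℝ} (hh0 : 0 < h) (hh1 : h ≤ 1) (hθ : 0 < θ) {m : ℕ}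
    (hm : h * (3 * √d * m + 1) ≤ r) :
    ∃ Z : Set (EuclideanSpace ℝ (Fin d) → ℝ), Z.Finite ∧
      (∀ f ∈ Z, ContDiff ℝ (⌊q⌋₊ : ℕ∞) f ∧ tsupport f ⊆ closedBall x₀ r ∧ (∀ x, |f x| ≤ θ) ∧
        cqNorm d q f ≤ 3 * B * θ * h ^ (-q) ∧ ∀ x, 0 ≤ f x) ∧
      (∀ f ∈ Z, ∀ g ∈ Z, f ≠ g → θ ≤ ⨆ x, |f x - g x|) ∧
      Z.ncard = 2 ^ m ^ d := by
  set c : (Fin d → Fin m) → EuclideanSpace ℝ (Fin d) := gridPoint x₀ (3 * h)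
  have hsep : Pairwise fun v w => 3 * h ≤ dist (c v) (c w) :=
    fun _ _ => le_dist_gridPoint x₀ (by positivity)
  have hball v : closedBall (c v) h ⊆ closedBall x₀ r := by
    refine closedBall_subset_closedBall' ?_
    nlinarith [dist_gridPoint_le x₀ (by positivity : 0 ≤ 3 * h) v]
  refine ⟨Set.range (bumpSum θ h c), Set.finite_range _, ?_, ?_, ?_⟩
  · rintro _ ⟨S, rfl⟩
    exact ⟨contDiff_bumpSum S, tsupport_bumpSum_subset hh0 isClosed_closedBall hball S,
      abs_bumpSum_le hθ.le hh0 hsep S, cqNorm_bumpSum_le hq hθ.le hh0 hh1 hsep hB S,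
      bumpSum_nonneg hθ.le S⟩
  · rintro _ ⟨S, rfl⟩ _ ⟨T, rfl⟩ hST
    exact le_iSup_abs_bumpSum_sub hθ.le hh0 hsep (ne_of_apply_ne _ hST)
  · simp [Set.ncard_range_of_injective (bumpSum_injective hθ hh0 hsep)]

theorem exp_le_two_pow_floor_pow (d : ℕ) {t : ℝ} (ht : 1 ≤ t) :
    Real.exp (2 ^ (-(d : ℝ) - 1) * t ^ d) ≤ 2 ^ ⌊t⌋₊ ^ d := by
  set m := ⌊t⌋₊
  have hm : t ≤ 2 * m := by
    have : (1 : ℝ) ≤ m := by exact_mod_cast Nat.le_floor (by exact_mod_cast ht)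
    linarith [Nat.lt_floor_add_one t]
  have hhalf : (2 : ℝ) ^ (-(d : ℝ) - 1) * 2 ^ d = 1 / 2 := by
    rw [← Real.rpow_natCast, ← Real.rpow_add two_pos, show -(d : ℝ) - 1 + d = -1 by ring,
      Real.rpow_neg_one]
    norm_num
  calc Real.exp (2 ^ (-(d : ℝ) - 1) * t ^ d)
      ≤ Real.exp (Real.log 2 * (m : ℝ) ^ d) := by
        refine Real.exp_le_exp.mpr ?_
        calc 2 ^ (-(d : ℝ) - 1) * t ^ d ≤ 2 ^ (-(d : ℝ) - 1) * (2 * m) ^ d := by gcongr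
          _ = 1 / 2 * (m : ℝ) ^ d := by rw [mul_pow, ← mul_assoc, hhalf]
          _ ≤ Real.log 2 * (m : ℝ) ^ d := by gcongr; linarith [Real.log_two_gt_d9]
    _ = 2 ^ m ^ d := by
        rw [← Real.rpow_def_of_pos two_pos, ← Real.rpow_natCast]
        norm_cast

theorem kolmogorov_entropy_lower_bound_general (d : ℕ) (q : ℝ) (hq : 0 < q)
    (x₀ : EuclideanSpace ℝ (Fin d)) (r : ℝ) (hr : 0 < r) :
    ∃ μ > (0 : ℝ), ∀ β : ℝ, 0 < β → ∀ θ : ℝ, 0 < θ → θ < μ * β →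
      ∃ Z : Set (EuclideanSpace ℝ (Fin d) → ℝ),
        Z.Finite ∧
        (∀ f ∈ Z, ContDiff ℝ (⌊q⌋₊ : ℕ∞) f ∧
          tsupport f ⊆ Metric.closedBall x₀ r ∧
          (∀ x, |f x| ≤ θ) ∧ cqNorm d q f ≤ β ∧ (∀ x, 0 ≤ f x)) ∧
        (∀ f ∈ Z, ∀ g ∈ Z, f ≠ g →
          θ ≤ ⨆ x : EuclideanSpace ℝ (Fin d), |f x - g x|) ∧
        Real.exp (2 ^ (-(d : ℝ) - 1) * (μ * β / θ) ^ ((d : ℝ) / q)) ≤ Z.ncard := by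
  obtain ⟨B, hB0, hB⟩ := (unitBump (EuclideanSpace ℝ (Fin d))).contDiff
    |>.exists_pos_bound_iteratedFDeriv (unitBump _).hasCompactSupport (⌊q⌋₊ + 1)
  -- `ρ ≤ 1` keeps `h ≤ 1`, and `ρ (3√d + 1) ≤ r` makes room in `K` for a grid of `⌊ρ/h⌋^d` bumps
  set ρ := min 1 (r / (3 * √d + 1))
  have hρ0 : 0 < ρ := lt_min one_pos (by positivity)
  have hρr : ρ * (3 * √d + 1) ≤ r := (le_div_iff₀ (by positivity)).mp (min_le_right _ _)
  refine ⟨ρ ^ q / (3 * B), by positivity, fun β hβ θ hθ hθμ => ?_⟩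
  -- the bump width `h` is chosen so that the `C^q` norm bound `3 B θ h^{-q}` of a bump sum is `β`
  set h := (3 * B * θ / β) ^ q⁻¹
  have hh0 : 0 < h := by positivity
  have hhq : h ^ q = 3 * B * θ / β := Real.rpow_inv_rpow (by positivity) hq.ne'
  have hρh : ρ ^ q / (3 * B) * β / θ = (ρ / h) ^ q := by
    rw [Real.div_rpow hρ0.le hh0.le, hhq]
    field_simp
  have hhρ : h < ρ := by
    rw [← Real.rpow_lt_rpow_iff hh0.le hρ0.le hq, hhq, div_lt_iff₀ hβ]
    calc 3 * B * θ < 3 * B * (ρ ^ q / (3 * B) * β) := by gcongr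
      _ = ρ ^ q * β := by field_simp
  have hgrid : h * (3 * √d * ⌊ρ / h⌋₊ + 1) ≤ r := by
    have hmh : (⌊ρ / h⌋₊ : ℝ) * h ≤ ρ := (le_div_iff₀ hh0).mp (Nat.floor_le (by positivity))
    nlinarith [Real.sqrt_nonneg d]
  obtain ⟨Z, hfin, hmem, hdist, hcard⟩ :=
    exists_bumpSum_packing hq.le hB x₀ hh0 (hhρ.le.trans (min_le_left _ _)) hθ hgrid
  refine ⟨Z, hfin, fun f hf => ?_, hdist, ?_⟩
  · obtain ⟨hf1, hf2, hf3, hf4, hf5⟩ := hmem f hf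
    refine ⟨hf1, hf2, hf3, hf4.trans_eq ?_, hf5⟩
    rw [Real.rpow_neg hh0.le, hhq]
    field_simp
  · rw [hcard, hρh, ← Real.rpow_mul (by positivity), mul_div_cancel₀ _ hq.ne', Real.rpow_natCast]
    exact_mod_cast exp_le_two_pow_floor_pow d ((one_le_div hh0).mpr hhρ.le)

/-- Kolmogorov's lower bound on the metric entropy of balls of nonnegative functions
in Hölder classes: there is `μ > 0` such that for any `β > 0` and `θ ∈ (0, μβ)`, the set
`X_{qθβ} = {f ∈ C₀^q(K) : ‖f‖_∞ ≤ θ, ‖f‖_{C^q} ≤ β, f ≥ 0}` contains a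
`θ`-distinguishable (in `L^∞`) subset `Z` with `|Z| ≥ exp(2^{-d-1}(μβ/θ)^{d/q})`. -/
theorem kolmogorov_entropy_lower_bound (d : ℕ) (hd : 2 ≤ d) (q : ℝ) (hq : 0 < q)
    (x₀ : EuclideanSpace ℝ (Fin d)) (r : ℝ) (hr : 0 < r) :
    ∃ μ > (0 : ℝ), ∀ β : ℝ, 0 < β → ∀ θ : ℝ, 0 < θ → θ < μ * β →
      ∃ Z : Set (EuclideanSpace ℝ (Fin d) → ℝ),
        Z.Finite ∧
        (∀ f ∈ Z, ContDiff ℝ (⌊q⌋₊ : ℕ∞) f ∧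
          tsupport f ⊆ Metric.closedBall x₀ r ∧
          (∀ x, |f x| ≤ θ) ∧ cqNorm d q f ≤ β ∧ (∀ x, 0 ≤ f x)) ∧
        (∀ f ∈ Z, ∀ g ∈ Z, f ≠ g →
          θ ≤ ⨆ x : EuclideanSpace ℝ (Fin d), |f x - g x|) ∧
        Real.exp (2 ^ (-(d : ℝ) - 1) * (μ * β / θ) ^ ((d : ℝ) / q)) ≤ Z.ncard :=
  kolmogorov_entropy_lower_bound_general d q hq x₀ r hr
end
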